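/- arXiv:2110.00616 — 11 statements merged into one kernel-verified Lean document; each statement's English description precedes it below -/
import Mathlib

section
/- Compatibility of dressing with the covariant derivative: Let A be a gauge potential on E, u : E → Matrix (Fin n) (Fin n) ℂ smooth with u x invertible for every x, and φ : E → (Fin n → ℂ) smooth. Define the dressed matter field φ^u x := ((u x)⁻¹).mulVec (φ x). Then the dressed covariant derivative of the dressed matter field is the dressing of the covariant derivative: for all x ∈ E and v ∈ E, (D_{A^u} φ^u) x v = ((u x)⁻¹).mulVec ((D_A φ) x v). -/
open Matrix

attribute [local instance] Matrix.linftyOpNormedRing Matrix.linftyOpNormedAlgebra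

variable {E : Type*} [NormedAddCommGroup E] [NormedSpace ℝ E] [FiniteDimensional ℝ E] {n : ℕ}

/-- The operator-norm normed group on `E →L[ℝ] Matrix (Fin n) (Fin n) ℂ` (matrices carrying the
`linftyOp` norm), supplied explicitly since instance search no longer finds it. -/
noncomputable instance instNormedAddCommGroupCLMMatrix :
    NormedAddCommGroup (E →L[ℝ] Matrix (Fin n) (Fin n) ℂ) :=
  @ContinuousLinearMap.toNormedAddCommGroup ℝ ℝ E _ _ _ _ _ _ NormedSpace.complexToReal _ _

/-- The corresponding real normed space structure (operator norm). -/
noncomputable instance instNormedSpaceCLMMatrix :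
    NormedSpace ℝ (E →L[ℝ] Matrix (Fin n) (Fin n) ℂ) :=
  @ContinuousLinearMap.toNormedSpace ℝ ℝ E _ _ _ _ _ _ NormedSpace.complexToReal _ _ ℝ _
    NormedSpace.complexToReal _

/-- The dressed potential `A^u` given by its pointwise evaluation:
`(A^u x) v = (u x)⁻¹ * (A x v) * (u x) + (u x)⁻¹ * (fderiv ℝ u x v)`. -/
noncomputable def dress (A : E → E → Matrix (Fin n) (Fin n) ℂ)
    (u : E → Matrix (Fin n) (Fin n) ℂ) : E → E → Matrix (Fin n) (Fin n) ℂ :=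
  fun x v => (u x)⁻¹ * A x v * u x + (u x)⁻¹ * fderiv ℝ u x v

/-- The covariant derivative of a matter field `φ` with respect to a potential `A`
(given in evaluated form): `(D_A φ) x v = fderiv ℝ φ x v + (A x v).mulVec (φ x)`. -/
noncomputable def covD (A : E → E → Matrix (Fin n) (Fin n) ℂ)
    (φ : E → (Fin n → ℂ)) : E → E → (Fin n → ℂ) :=
  fun x v => fderiv ℝ φ x v + (A x v).mulVec (φ x)

/-- `mulVec` as a continuous `ℝ`-linear map in the matrix argument, valued in
continuous linear maps on vectors. -/
noncomputable def mulVecCLM (n : ℕ) :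
    Matrix (Fin n) (Fin n) ℂ →L[ℝ] (Fin n → ℂ) →L[ℝ] (Fin n → ℂ) :=
  LinearMap.toContinuousLinearMap
  { toFun := fun M =>
      LinearMap.toContinuousLinearMap ((Matrix.mulVecLin M).restrictScalars ℝ)
    map_add' := by
      intro M N
      ext w i
      simp [Matrix.add_mulVec]
    map_smul' := by
      intro r M
      ext w i
      simp [Matrix.mulVec, dotProduct, Finset.smul_sum, smul_mul_assoc, mul_assoc] }

@[simp] lemma mulVecCLM_apply (M : Matrix (Fin n) (Fin n) ℂ) (w : Fin n → ℂ) :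
    mulVecCLM n M w = M.mulVec w := rfl

/-- Compatibility of dressing with the covariant derivative:
`(D_{A^u} φ^u) x v = (u x)⁻¹.mulVec ((D_A φ) x v)` where `φ^u x = (u x)⁻¹.mulVec (φ x)`. -/
theorem dressed_covariant_derivative
    (hn : 0 < n)
    (A : E → (E →L[ℝ] Matrix (Fin n) (Fin n) ℂ)) (hA : ContDiff ℝ (⊤ : ℕ∞) A)
    (u : E → Matrix (Fin n) (Fin n) ℂ) (hu : ContDiff ℝ (⊤ : ℕ∞) u)
    (huinv : ∀ x, IsUnit (u x))
    (φ : E → (Fin n → ℂ)) (hφ : ContDiff ℝ (⊤ : ℕ∞) φ) :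
    ∀ x v : E,
      covD (dress (fun y w => A y w) u) (fun y => ((u y)⁻¹).mulVec (φ y)) x v
        = ((u x)⁻¹).mulVec (covD (fun y w => A y w) φ x v) := by
  intro x v
  have hud : HasFDerivAt u (fderiv ℝ u x) x :=
    (hu.differentiable (by simp) x).hasFDerivAt
  have hφd : HasFDerivAt φ (fderiv ℝ φ x) x :=
    (hφ.differentiable (by simp) x).hasFDerivAt
  have hunit : ((huinv x).unit : Matrix (Fin n) (Fin n) ℂ) = u x := (huinv x).unit_spec
  have hri := Ring.inverse_unit (huinv x).unit
  rw [hunit] at hri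
  have hinvcoe : (((huinv x).unit⁻¹ : (Matrix (Fin n) (Fin n) ℂ)ˣ) : Matrix (Fin n) (Fin n) ℂ)
      = (u x)⁻¹ := by
    rw [Matrix.nonsing_inv_eq_ringInverse, hri]
  have hinv : HasFDerivAt (fun y => (u y)⁻¹)
      (((-ContinuousLinearMap.mulLeftRight ℝ _ (u x)⁻¹ (u x)⁻¹).comp (fderiv ℝ u x))) x := by
    have h1 := (hasFDerivAt_ringInverse (𝕜 := ℝ) (huinv x).unit)
    rw [hunit, hinvcoe] at h1
    have h2 := h1.comp x hud
    have : (fun y => (u y)⁻¹) = fun y => Ring.inverse (u y) := by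
      funext y; exact Matrix.nonsing_inv_eq_ringInverse _
    rw [this]
    exact h2
  have hc : HasFDerivAt (fun y => mulVecCLM n ((u y)⁻¹))
      ((mulVecCLM n).comp ((-ContinuousLinearMap.mulLeftRight ℝ _ (u x)⁻¹ (u x)⁻¹).comp
        (fderiv ℝ u x))) x :=
    ((mulVecCLM n).hasFDerivAt).comp x hinv
  have hD : HasFDerivAt (fun y => ((u y)⁻¹).mulVec (φ y))
      ((mulVecCLM n (u x)⁻¹).comp (fderiv ℝ φ x)
        + (((mulVecCLM n).comp ((-ContinuousLinearMap.mulLeftRight ℝ _ (u x)⁻¹ (u x)⁻¹).comp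
            (fderiv ℝ u x))).flip (φ x))) x := by
    have := hc.clm_apply hφd
    simpa using this
  have hUW : u x * (u x)⁻¹ = 1 :=
    Matrix.mul_nonsing_inv (u x) ((Matrix.isUnit_iff_isUnit_det (u x)).mp (huinv x))
  simp only [covD, dress, hD.fderiv]
  simp only [ContinuousLinearMap.add_apply, ContinuousLinearMap.comp_apply,
    ContinuousLinearMap.flip_apply, ContinuousLinearMap.neg_apply,
    ContinuousLinearMap.mulLeftRight_apply, mulVecCLM_apply, Matrix.neg_mulVec,
    Matrix.add_mulVec, Matrix.mulVec_mulVec, Matrix.mulVec_add]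
  rw [show ∀ w, ((mulVecCLM n).comp ((-ContinuousLinearMap.mulLeftRight ℝ _ (u x)⁻¹ (u x)⁻¹).comp
      (fderiv ℝ u x)) v) w = (-((u x)⁻¹ * fderiv ℝ u x v * (u x)⁻¹)) *ᵥ w from fun w => rfl,
    Matrix.neg_mulVec]
  rw [Matrix.add_mul, Matrix.mul_assoc ((u x)⁻¹ * A x v) (u x) (u x)⁻¹, hUW, Matrix.mul_one,
    Matrix.add_mulVec]
  abel
end

section
/- Residual gauge transformation of the dressed potential: Let A be a gauge potential on E and u, η : E → Matrix (Fin n) (Fin n) ℂ smooth with u x and η x invertible for every x. If the dressing field transforms by conjugation under η, i.e. one dresses the gauge-transformed potential A^η with the field u^η x := (η x)⁻¹ * (u x) * (η x), then the resulting dressed potential is exactly the gauge transform of A^u by η: for all x ∈ E and v ∈ E, ((A^η)^(u^η)) x v = (η x)⁻¹ * ((A^u) x v) * (η x) + (η x)⁻¹ * (dη x v). -/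
open Matrix

attribute [local instance] Matrix.linftyOpNormedRing Matrix.linftyOpNormedAlgebra

variable {E : Type*} [NormedAddCommGroup E] [NormedSpace ℝ E] [FiniteDimensional ℝ E] {n : ℕ}

private lemma fderiv_mul_apply {f g : E → Matrix (Fin n) (Fin n) ℂ} {x v : E}
    (hf : DifferentiableAt ℝ f x) (hg : DifferentiableAt ℝ g x) :
    fderiv ℝ (fun y => f y * g y) x v
      = fderiv ℝ f x v * g x + f x * fderiv ℝ g x v := by
  erw [(hf.hasFDerivAt.mul' hg.hasFDerivAt).fderiv]
  exact add_comm _ _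

private lemma fderiv_inv_apply {f : E → Matrix (Fin n) (Fin n) ℂ} {x v : E}
    (hf : DifferentiableAt ℝ f x) (hfu : IsUnit (f x)) :
    fderiv ℝ (fun y => (f y)⁻¹) x v
      = -((f x)⁻¹ * fderiv ℝ f x v * (f x)⁻¹) := by
  obtain ⟨w, hw⟩ := hfu
  have h0 := hasFDerivAt_ringInverse (𝕜 := ℝ) w
  rw [hw] at h0
  have h : HasFDerivAt (fun y => Ring.inverse (f y))
      ((-ContinuousLinearMap.mulLeftRight ℝ _ (↑w⁻¹) (↑w⁻¹)).comp (fderiv ℝ f x)) x :=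
    h0.comp x hf.hasFDerivAt
  have heq : (fun y => (f y)⁻¹) = fun y => Ring.inverse (f y) := by
    funext y; rw [Matrix.nonsing_inv_eq_ringInverse]
  rw [heq]
  erw [h.fderiv]
  simp only [Matrix.nonsing_inv_eq_ringInverse]
  rw [← hw, Ring.inverse_unit]
  rfl

private lemma differentiable_inv {f : E → Matrix (Fin n) (Fin n) ℂ} {x : E}
    (hf : DifferentiableAt ℝ f x) (hfu : IsUnit (f x)) :
    DifferentiableAt ℝ (fun y => (f y)⁻¹) x := by
  have heq : (fun y => (f y)⁻¹) = fun y => Ring.inverse (f y) := by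
    funext y; rw [Matrix.nonsing_inv_eq_ringInverse]
  rw [heq]
  exact (differentiableAt_inverse hfu).comp x hf

/-- Residual gauge transformation of the dressed potential: if the dressing field transforms by
conjugation, `u^η x = (η x)⁻¹ * u x * η x`, then `(A^η)^(u^η)` is the gauge transform of `A^u`
by `η`. -/
theorem dressed_potential_residual_gauge_transformation
    (hn : 0 < n)
    (A : E → (E →L[ℝ] Matrix (Fin n) (Fin n) ℂ)) (hA : @ContDiff ℝ _ E _ _ (E →L[ℝ] Matrix (Fin n) (Fin n) ℂ)
      ContinuousLinearMap.toNormedAddCommGroup ContinuousLinearMap.toNormedSpace ⊤ A)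
    (u η : E → Matrix (Fin n) (Fin n) ℂ)
    (hu : ContDiff ℝ ⊤ u) (hη : ContDiff ℝ ⊤ η)
    (huinv : ∀ x, IsUnit (u x)) (hηinv : ∀ x, IsUnit (η x)) :
    ∀ x v : E,
      dress (dress (fun y w => A y w) η) (fun y => (η y)⁻¹ * u y * η y) x v
        = (η x)⁻¹ * dress (fun y w => A y w) u x v * η x
          + (η x)⁻¹ * fderiv ℝ η x v := by
  intro x v
  have hud : DifferentiableAt ℝ u x := (hu.differentiable (by simp)).differentiableAt
  have hηd : DifferentiableAt ℝ η x := (hη.differentiable (by simp)).differentiableAt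
  have hηid : DifferentiableAt ℝ (fun y => (η y)⁻¹) x := differentiable_inv hηd (hηinv x)
  set a := η x with ha
  set b := u x with hb
  set p := fderiv ℝ η x v with hp
  set q := fderiv ℝ u x v with hq
  have haa : a * a⁻¹ = 1 := Matrix.mul_nonsing_inv a ((Matrix.isUnit_iff_isUnit_det a).mp (hηinv x))
  have hai : a⁻¹ * a = 1 := Matrix.nonsing_inv_mul a ((Matrix.isUnit_iff_isUnit_det a).mp (hηinv x))
  have hbb : b * b⁻¹ = 1 := Matrix.mul_nonsing_inv b ((Matrix.isUnit_iff_isUnit_det b).mp (huinv x))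
  have hbi : b⁻¹ * b = 1 := Matrix.nonsing_inv_mul b ((Matrix.isUnit_iff_isUnit_det b).mp (huinv x))
  -- inverse of the conjugated dressing field
  have hwinv : (a⁻¹ * b * a)⁻¹ = a⁻¹ * b⁻¹ * a := by
    rw [Matrix.mul_inv_rev, Matrix.mul_inv_rev,
      Matrix.nonsing_inv_nonsing_inv a ((Matrix.isUnit_iff_isUnit_det a).mp (hηinv x))]
    rw [Matrix.mul_assoc]
  -- derivative of the conjugated dressing field
  have hD : fderiv ℝ (fun y => (η y)⁻¹ * u y * η y) x v
      = -(a⁻¹ * p * a⁻¹) * b * a + a⁻¹ * q * a + (a⁻¹ * b) * p := by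
    have h1 : DifferentiableAt ℝ (fun y => (η y)⁻¹ * u y) x := hηid.mul hud
    rw [fderiv_mul_apply h1 hηd, fderiv_mul_apply hηid hud,
      fderiv_inv_apply hηd (hηinv x)]
    simp only [← ha, ← hb, ← hp, ← hq]
    noncomm_ring
  simp only [dress, ContinuousLinearMap.coe_coe] at *
  rw [hD, hwinv]
  simp only [← ha, ← hb, ← hp, ← hq]
  have h1 : ∀ X : Matrix (Fin n) (Fin n) ℂ, a * (a⁻¹ * X) = X := fun X => by
    rw [← Matrix.mul_assoc, haa, Matrix.one_mul]
  have h2 : ∀ X : Matrix (Fin n) (Fin n) ℂ, a⁻¹ * (a * X) = X := fun X => by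
    rw [← Matrix.mul_assoc, hai, Matrix.one_mul]
  have h3 : ∀ X : Matrix (Fin n) (Fin n) ℂ, b⁻¹ * (b * X) = X := fun X => by
    rw [← Matrix.mul_assoc, hbi, Matrix.one_mul]
  simp only [Matrix.mul_add, Matrix.add_mul, Matrix.mul_assoc, neg_mul, Matrix.mul_neg, h1, h2, h3]
  abel
end

section
/- Transformation of the dressed potential under a change of dressing field: Let A be a gauge potential on E and let u, ξ : E → Matrix (Fin n) (Fin n) ℂ be smooth with u x and ξ x invertible for every x. Then dressing A with the pointwise product u·ξ gives, for all x ∈ E and v ∈ E, (A^(u·ξ)) x v = (ξ x)⁻¹ * ((A^u) x v) * (ξ x) + (ξ x)⁻¹ * (dξ x v); that is, the ambiguity ξ in the choice of dressing field acts on the dressed potential by the gauge-transformation formula. -/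
open Matrix

attribute [local instance] Matrix.linftyOpNormedRing Matrix.linftyOpNormedAlgebra

variable {E : Type*} [NormedAddCommGroup E] [NormedSpace ℝ E] [FiniteDimensional ℝ E] {n : ℕ}

/-- Transformation of the dressed potential under a change of dressing field `u ↦ u·ξ`:
the ambiguity `ξ` acts on the dressed potential by the gauge-transformation formula. -/
theorem dressed_potential_change_of_dressing
    (hn : 0 < n)
    (A : E → (E →L[ℝ] Matrix (Fin n) (Fin n) ℂ)) (hA : @ContDiff ℝ _ E _ _ _ ContinuousLinearMap.toNormedAddCommGroup ContinuousLinearMap.toNormedSpace ⊤ A)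
    (u ξ : E → Matrix (Fin n) (Fin n) ℂ)
    (hu : ContDiff ℝ ⊤ u) (hξ : ContDiff ℝ ⊤ ξ)
    (huinv : ∀ x, IsUnit (u x)) (hξinv : ∀ x, IsUnit (ξ x)) :
    ∀ x v : E,
      dress (fun y w => A y w) (fun y => u y * ξ y) x v
        = (ξ x)⁻¹ * dress (fun y w => A y w) u x v * ξ x
          + (ξ x)⁻¹ * fderiv ℝ ξ x v := by
  intro x v
  have hud : DifferentiableAt ℝ u x := (hu.differentiable (by simp)) x
  have hξd : DifferentiableAt ℝ ξ x := (hξ.differentiable (by simp)) x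
  have hderiv : fderiv ℝ (fun y => u y * ξ y) x v
      = u x * fderiv ℝ ξ x v + fderiv ℝ u x v * ξ x := by
    erw [fderiv_mul' hud hξd]
    rfl
  have hinv : (u x * ξ x)⁻¹ = (ξ x)⁻¹ * (u x)⁻¹ := Matrix.mul_inv_rev _ _
  have hu1 : (u x)⁻¹ * u x = 1 :=
    Matrix.nonsing_inv_mul _ ((Matrix.isUnit_iff_isUnit_det _).mp (huinv x))
  simp only [dress, hderiv, hinv]
  rw [mul_add]
  have : (ξ x)⁻¹ * (u x)⁻¹ * (u x * fderiv ℝ ξ x v)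
      = (ξ x)⁻¹ * fderiv ℝ ξ x v := by
    rw [mul_assoc, ← mul_assoc (u x)⁻¹, hu1, one_mul]
  rw [this]
  noncomm_ring
end

section
/- The phase of a nowhere-vanishing complex scalar is a U(1) dressing field and the dressed Abelian potential is gauge invariant: Let E be a finite-dimensional real normed vector space, A : E → (E →L[ℝ] ℂ) smooth, φ : E → ℂ smooth with φ x ≠ 0 for all x, and γ : E → ℂ smooth with |γ x| = 1 for all x. Define u(φ) x := φ x / |φ x|. Then (i) u(γ⁻¹·φ) x = (γ x)⁻¹ · (u(φ) x), and (ii) for all x ∈ E and v ∈ E, (A x v + (γ x)⁻¹·(fderiv ℝ γ x v)) + (u(γ⁻¹·φ) x)⁻¹·(fderiv ℝ (fun y => u(γ⁻¹·φ) y) x v) = A x v + (u(φ) x)⁻¹·(fderiv ℝ (fun y => u(φ) y) x v). -/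
variable {E : Type*} [NormedAddCommGroup E] [NormedSpace ℝ E] [FiniteDimensional ℝ E]

/-- The phase of a complex scalar field: `u(φ) x = φ x / |φ x|`. -/
noncomputable def phaseDressing (φ : E → ℂ) (x : E) : ℂ :=
  φ x / (‖φ x‖ : ℂ)

lemma phaseDressing_ne_zero (φ : E → ℂ) (x : E) (h : φ x ≠ 0) :
    phaseDressing φ x ≠ 0 := by
  have : (‖φ x‖ : ℂ) ≠ 0 := by
    simpa using h
  exact div_ne_zero h this

lemma phaseDressing_diff (φ : E → ℂ) (hφ : ContDiff ℝ (⊤ : ℕ∞) φ) (hφ0 : ∀ x, φ x ≠ 0) (x : E) :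
    DifferentiableAt ℝ (fun y => phaseDressing φ y) x := by
  have hd : DifferentiableAt ℝ φ x := (hφ.differentiable (by simp)) x
  have hnorm : DifferentiableAt ℝ (fun y => ‖φ y‖) x := hd.norm ℝ (hφ0 x)
  have hcast : DifferentiableAt ℝ (fun y => ((‖φ y‖ : ℝ) : ℂ)) x := by
    have : DifferentiableAt ℝ (Complex.ofRealCLM ∘ fun y => ‖φ y‖) x :=
      Complex.ofRealCLM.differentiable.differentiableAt.comp x hnorm
    exact this
  have hne : ((‖φ x‖ : ℝ) : ℂ) ≠ 0 := by
    simpa using hφ0 x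
  simp only [phaseDressing, div_eq_mul_inv]
  exact hd.mul (hcast.inv hne)

/-- The phase of a nowhere-vanishing complex scalar is a `U(1)` dressing field, and the dressed
Abelian potential `A^u x v = A x v + (u x)⁻¹ * (fderiv ℝ u x v)` is gauge invariant. -/
theorem phase_dressing_field_and_invariance
    (A : E → (E →L[ℝ] ℂ)) (hA : ContDiff ℝ (⊤ : ℕ∞) A)
    (φ : E → ℂ) (hφ : ContDiff ℝ (⊤ : ℕ∞) φ) (hφ0 : ∀ x, φ x ≠ 0)
    (γ : E → ℂ) (hγ : ContDiff ℝ (⊤ : ℕ∞) γ) (hγ1 : ∀ x, ‖γ x‖ = 1) :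
    (∀ x : E, phaseDressing (fun y => (γ y)⁻¹ * φ y) x = (γ x)⁻¹ * phaseDressing φ x) ∧
    (∀ x v : E,
        (A x v + (γ x)⁻¹ * fderiv ℝ γ x v)
            + (phaseDressing (fun y => (γ y)⁻¹ * φ y) x)⁻¹
              * fderiv ℝ (fun y => phaseDressing (fun z => (γ z)⁻¹ * φ z) y) x v
          = A x v + (phaseDressing φ x)⁻¹ * fderiv ℝ (fun y => phaseDressing φ y) x v) := by
  have hγ0 : ∀ x, γ x ≠ 0 := by
    intro x h
    have := hγ1 x
    rw [h] at this
    simp at this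
  have h1 : ∀ x : E, phaseDressing (fun y => (γ y)⁻¹ * φ y) x = (γ x)⁻¹ * phaseDressing φ x := by
    intro x
    simp only [phaseDressing, norm_mul, norm_inv, hγ1 x]
    simp [div_eq_mul_inv, mul_assoc]
  refine ⟨h1, fun x v => ?_⟩
  have hu : DifferentiableAt ℝ (fun y => phaseDressing φ y) x :=
    phaseDressing_diff φ hφ hφ0 x
  have hγd : DifferentiableAt ℝ γ x := (hγ.differentiable (by simp)) x
  have hγinv : HasFDerivAt (fun y => (γ y)⁻¹)
      ((-ContinuousLinearMap.mulLeftRight ℝ ℂ (γ x)⁻¹ (γ x)⁻¹).comp (fderiv ℝ γ x)) x :=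
    (hasFDerivAt_inv' (hγ0 x)).comp x hγd.hasFDerivAt
  have hmul : HasFDerivAt (fun y => (γ y)⁻¹ * phaseDressing φ y)
      ((γ x)⁻¹ • fderiv ℝ (fun y => phaseDressing φ y) x
        + phaseDressing φ x •
          ((-ContinuousLinearMap.mulLeftRight ℝ ℂ (γ x)⁻¹ (γ x)⁻¹).comp (fderiv ℝ γ x))) x :=
    hγinv.mul hu.hasFDerivAt
  have hfun : (fun y => phaseDressing (fun z => (γ z)⁻¹ * φ z) y)
      = fun y => (γ y)⁻¹ * phaseDressing φ y := funext fun y => h1 y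
  rw [h1 x, hfun, hmul.fderiv]
  simp only [ContinuousLinearMap.add_apply, ContinuousLinearMap.smul_apply,
    ContinuousLinearMap.comp_apply, ContinuousLinearMap.neg_apply,
    ContinuousLinearMap.mulLeftRight_apply, smul_eq_mul]
  have hφne := phaseDressing_ne_zero φ x (hφ0 x)
  have hγne := hγ0 x
  have e1 : γ x * (γ x)⁻¹ = 1 := mul_inv_cancel₀ hγne
  have e2 : phaseDressing φ x * (phaseDressing φ x)⁻¹ = 1 := mul_inv_cancel₀ hφne
  rw [mul_inv, inv_inv]
  linear_combination (fderiv ℝ (fun y => phaseDressing φ y) x v * (phaseDressing φ x)⁻¹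
      - fderiv ℝ γ x v * (γ x)⁻¹ * phaseDressing φ x * (phaseDressing φ x)⁻¹) * e1
    + (-(fderiv ℝ γ x v * (γ x)⁻¹)) * e2
end

section
/- Dressed form of the minimal coupling in the Abelian Higgs model: Let E be a finite-dimensional real normed vector space, A : E → (E →L[ℝ] ℂ) smooth, and φ : E → ℂ smooth with φ x ≠ 0 for all x. Write ρ x := |φ x| (a smooth real-valued function), u x := φ x / |φ x|, and A^u x v := A x v + (u x)⁻¹·(fderiv ℝ u x v). Then the minimal coupling term factorizes through the gauge-invariant variables ρ and A^u: for all x ∈ E and v ∈ E, fderiv ℝ φ x v + (A x v)·(φ x) = (u x)·((fderiv ℝ ρ x v : ℂ) + (A^u x v)·(ρ x : ℂ)). -/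
variable {E : Type*} [NormedAddCommGroup E] [NormedSpace ℝ E] [FiniteDimensional ℝ E]

/-- Dressed form of the minimal coupling in the Abelian Higgs model: with the polar
decomposition `φ = u·ρ` (`ρ x = |φ x|`, `u x = φ x / |φ x|`) and the dressed potential
`A^u x v = A x v + (u x)⁻¹ * (fderiv ℝ u x v)`, the minimal coupling term factorizes as
`D^A φ x v = u x * (dρ x v + (A^u x v)·(ρ x))`. -/
theorem abelian_higgs_minimal_coupling_dressed
    (A : E → (E →L[ℝ] ℂ)) (hA : ContDiff ℝ (⊤ : ℕ∞) A)
    (φ : E → ℂ) (hφ : ContDiff ℝ (⊤ : ℕ∞) φ) (hφ0 : ∀ x, φ x ≠ 0) :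
    ∀ x v : E,
      fderiv ℝ φ x v + (A x v) * (φ x)
        = (φ x / (‖φ x‖ : ℂ))
            * ((fderiv ℝ (fun y => ‖φ y‖) x v : ℂ)
              + (A x v
                  + (φ x / (‖φ x‖ : ℂ))⁻¹
                    * fderiv ℝ (fun y => φ y / (‖φ y‖ : ℂ)) x v)
                * (‖φ x‖ : ℂ)) := by
  intro x v
  have habs : ‖φ x‖ ≠ 0 := norm_ne_zero_iff.mpr (hφ0 x)
  have h0 : (‖φ x‖ : ℂ) ≠ 0 := by exact_mod_cast habs
  have hφd : DifferentiableAt ℝ φ x := hφ.differentiable (by simp) x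
  have hnorm : (fun y => ‖φ y‖) = fun y => ‖φ y‖ := by
    funext y; rfl
  have hrd : DifferentiableAt ℝ (fun y => ‖φ y‖) x := by
    exact ((hφ.differentiable (by simp) x).norm ℝ (hφ0 x))
  have hrcd : HasFDerivAt (fun y => ((‖φ y‖ : ℂ)))
      (Complex.ofRealCLM.comp (fderiv ℝ (fun y => ‖φ y‖) x)) x :=
    Complex.ofRealCLM.hasFDerivAt.comp x hrd.hasFDerivAt
  have hud : DifferentiableAt ℝ (fun y => φ y / (‖φ y‖ : ℂ)) x := by
    have hrcd' : DifferentiableAt ℝ (fun y => ((‖φ y‖ : ℂ))) x :=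
      hrcd.differentiableAt
    simp only [div_eq_mul_inv]
    exact hφd.mul (hrcd'.inv h0)
  have hfun : φ = fun y => (φ y / (‖φ y‖ : ℂ)) * (‖φ y‖ : ℂ) := by
    funext y
    have : (‖φ y‖ : ℂ) ≠ 0 := by
      exact_mod_cast norm_ne_zero_iff.mpr (hφ0 y)
    field_simp
  have hder : fderiv ℝ φ x v
      = fderiv ℝ (fun y => φ y / (‖φ y‖ : ℂ)) x v * (‖φ x‖ : ℂ)
        + (φ x / (‖φ x‖ : ℂ))
          * (fderiv ℝ (fun y => ‖φ y‖) x v : ℂ) := by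
    conv_lhs => rw [hfun]
    rw [fderiv_fun_mul hud hrcd.differentiableAt, hrcd.fderiv]
    simp only [ContinuousLinearMap.add_apply, ContinuousLinearMap.smul_apply,
      ContinuousLinearMap.comp_apply, Complex.ofRealCLM_apply, smul_eq_mul]
    ring
  have hu0 : (φ x / (‖φ x‖ : ℂ)) ≠ 0 := div_ne_zero (hφ0 x) h0
  have huρ : (φ x / (‖φ x‖ : ℂ)) * (‖φ x‖ : ℂ) = φ x := by
    field_simp
  have hφx := hφ0 x
  rw [hder]
  field_simp
  ring
end

section
/- The electroweak dressing matrix is special unitary and gives the polar decomposition of the Higgs doublet: for every φ = (φ₁, φ₂) ∈ (Fin 2 → ℂ) with φ ≠ 0, the matrix u(φ) is an element of SU(2) (i.e. u(φ)ᴴ * u(φ) = 1 and det (u(φ)) = 1), and u(φ).mulVec ![0, (‖φ‖ : ℂ)] = φ. -/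
open Matrix

/-- `‖φ‖ = √(‖φ₁‖² + ‖φ₂‖²)` for a complex doublet `φ = (φ₁, φ₂)`. -/
noncomputable def doubletNorm (φ : Fin 2 → ℂ) : ℝ :=
  Real.sqrt (‖φ 0‖ ^ 2 + ‖φ 1‖ ^ 2)

/-- The electroweak dressing matrix `u(φ) = (1/‖φ‖) • ![![conj φ₂, φ₁], ![-conj φ₁, φ₂]]`. -/
noncomputable def dressingMatrix (φ : Fin 2 → ℂ) : Matrix (Fin 2) (Fin 2) ℂ :=
  (1 / (doubletNorm φ : ℂ)) •
    ![![starRingEnd ℂ (φ 1), φ 0], ![-(starRingEnd ℂ (φ 0)), φ 1]]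

lemma doubletNorm_pos (φ : Fin 2 → ℂ) (hφ : φ ≠ 0) : 0 < doubletNorm φ := by
  apply Real.sqrt_pos.2
  rcases (em (φ 0 = 0)) with h0 | h0
  · rcases (em (φ 1 = 0)) with h1 | h1
    · exact absurd (funext fun i => by fin_cases i <;> simpa [h0, h1]) hφ
    · have : 0 < ‖φ 1‖ := norm_pos_iff.2 h1
      nlinarith [sq_nonneg ‖φ 0‖]
  · have : 0 < ‖φ 0‖ := norm_pos_iff.2 h0
    nlinarith [sq_nonneg ‖φ 1‖]

lemma doubletNorm_sq (φ : Fin 2 → ℂ) :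
    ((doubletNorm φ : ℂ)) * (doubletNorm φ : ℂ)
      = starRingEnd ℂ (φ 0) * φ 0 + starRingEnd ℂ (φ 1) * φ 1 := by
  have h0 : starRingEnd ℂ (φ 0) * φ 0 = ((‖φ 0‖ ^ 2 : ℝ) : ℂ) := by
    rw [mul_comm]; rw [Complex.mul_conj']
    push_cast [Complex.sq_norm]
    simp [Complex.normSq_eq_norm_sq]
  have h1 : starRingEnd ℂ (φ 1) * φ 1 = ((‖φ 1‖ ^ 2 : ℝ) : ℂ) := by
    rw [mul_comm]; rw [Complex.mul_conj']
    push_cast [Complex.sq_norm]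
    simp [Complex.normSq_eq_norm_sq]
  rw [h0, h1, ← Complex.ofReal_mul, ← Complex.ofReal_add]
  norm_cast
  exact Real.mul_self_sqrt (by positivity)

/-- The electroweak dressing matrix is special unitary and gives the polar decomposition of
the Higgs doublet. -/
theorem dressingMatrix_mem_SU2_and_polar (φ : Fin 2 → ℂ) (hφ : φ ≠ 0) :
    dressingMatrix φ ∈ Matrix.specialUnitaryGroup (Fin 2) ℂ ∧
    (dressingMatrix φ)ᴴ * dressingMatrix φ = 1 ∧
    (dressingMatrix φ).det = 1 ∧
    (dressingMatrix φ).mulVec ![0, (doubletNorm φ : ℂ)] = φ := by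
  have hr : 0 < doubletNorm φ := doubletNorm_pos φ hφ
  have hrC : ((doubletNorm φ : ℂ)) ≠ 0 := by
    exact_mod_cast Complex.ofReal_ne_zero.2 hr.ne'
  have hsq := doubletNorm_sq φ
  have hstar : (dressingMatrix φ)ᴴ * dressingMatrix φ = 1 := by
    ext i j
    rw [Matrix.mul_apply, Fin.sum_univ_two, Matrix.conjTranspose_apply, Matrix.conjTranspose_apply]
    fin_cases i <;> fin_cases j <;>
      simp [dressingMatrix, Matrix.mul_apply, Fin.sum_univ_two, Matrix.conjTranspose_apply,
        Matrix.one_apply, div_mul_div_comm] <;>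
      field_simp <;>
      (first
        | ring1
        | linear_combination -hsq
        | linear_combination hsq)
  have hdet : (dressingMatrix φ).det = 1 := by
    rw [Matrix.det_fin_two]
    simp only [dressingMatrix, Matrix.det_fin_two, Matrix.smul_apply, Matrix.cons_val',
      Matrix.cons_val_zero, Matrix.cons_val_one, Matrix.head_cons, Matrix.head_fin_const,
      Matrix.empty_val', Matrix.cons_val_fin_one, smul_eq_mul, Pi.smul_apply]
    field_simp
    first
      | linear_combination -hsq
      | linear_combination hsq
  refine ⟨Matrix.mem_specialUnitaryGroup_iff.2 ⟨Matrix.mem_unitaryGroup_iff'.2 hstar, hdet⟩,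
    hstar, hdet, ?_⟩
  ext i
  fin_cases i <;>
    simp [dressingMatrix, Matrix.mulVec, dotProduct, Fin.sum_univ_two] <;>
    field_simp
end

section
/- SU(2)-equivariance of the electroweak dressing field: for every β ∈ SU(2) and every φ ∈ (Fin 2 → ℂ) with φ ≠ 0, one has u(β.val.mulVec φ) = β.val * u(φ). Equivalently, under the gauge transformation φ ↦ β⁻¹·φ of the Higgs doublet, the dressing matrix transforms as u ↦ β⁻¹·u. -/
open Matrix

/-- SU(2)-equivariance of the electroweak dressing field:
`u(β · φ) = β * u(φ)`, i.e. under `φ ↦ β⁻¹ · φ` the dressing matrix transforms as `u ↦ β⁻¹ · u`. -/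
theorem dressingMatrix_SU2_equivariant
    (β : Matrix.specialUnitaryGroup (Fin 2) ℂ) (φ : Fin 2 → ℂ) (hφ : φ ≠ 0) :
    dressingMatrix (β.val.mulVec φ) = β.val * dressingMatrix φ := by
  obtain ⟨hu, hdet⟩ := Matrix.mem_specialUnitaryGroup_iff.mp β.2
  set B := β.val with hB
  -- inverse is star, also inverse is adjugate since det = 1
  have hstar : star B * B = 1 := (Matrix.mem_unitaryGroup_iff'.mp hu)
  have hadj : B.adjugate * B = 1 := by
    have := B.adjugate_mul
    rwa [hdet, one_smul] at this
  have hsa : B.adjugate = star B := by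
    calc B.adjugate = B.adjugate * (B * B⁻¹) := by
          rw [Matrix.mul_nonsing_inv B (by rw [hdet]; exact isUnit_one), mul_one]
      _ = star B := by
          rw [← mul_assoc, hadj, one_mul,
            Matrix.inv_eq_left_inv hstar]
  set a := B 0 0 with ha
  set b := B 0 1 with hb
  have hd : B 1 1 = starRingEnd ℂ a := by
    have := congrFun (congrFun hsa 0) 0
    simpa [Matrix.adjugate_fin_two, Matrix.star_apply] using this
  have hc : B 1 0 = -starRingEnd ℂ b := by
    have := congrFun (congrFun hsa 0) 1
    simp [Matrix.adjugate_fin_two, Matrix.star_apply] at this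
    rw [← Complex.conj_conj (B 1 0), ← this, map_neg]
  have hab : a * starRingEnd ℂ a + b * starRingEnd ℂ b = 1 := by
    have := hdet
    rw [Matrix.det_fin_two, hd, hc] at this
    linear_combination this
  -- norm invariance
  have hmv0 : B.mulVec φ 0 = a * φ 0 + b * φ 1 := by
    simp [Matrix.mulVec, dotProduct, Fin.sum_univ_two, ha, hb]
  have hmv1 : B.mulVec φ 1 = -starRingEnd ℂ b * φ 0 + starRingEnd ℂ a * φ 1 := by
    simp [Matrix.mulVec, dotProduct, Fin.sum_univ_two, hc, hd]
  have hnorm : doubletNorm (B.mulVec φ) = doubletNorm φ := by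
    unfold doubletNorm
    congr 1
    have key : ∀ z : ℂ, ((‖z‖ : ℝ) : ℂ) ^ 2 = z * starRingEnd ℂ z := by
      intro z
      rw [Complex.mul_conj]
      norm_cast
      rw [Complex.normSq_eq_norm_sq]
    have : ((‖B.mulVec φ 0‖ ^ 2 + ‖B.mulVec φ 1‖ ^ 2 : ℝ) : ℂ)
        = ((‖φ 0‖ ^ 2 + ‖φ 1‖ ^ 2 : ℝ) : ℂ) := by
      push_cast
      rw [key, key, key, key, hmv0, hmv1]
      simp only [_root_.map_add, _root_.map_mul, _root_.map_neg, Complex.conj_conj]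
      linear_combination (φ 0 * starRingEnd ℂ (φ 0) + φ 1 * starRingEnd ℂ (φ 1)) * hab
    exact_mod_cast this
  unfold dressingMatrix
  rw [hnorm]
  erw [Matrix.mul_smul]
  congr 1
  ext i j
  fin_cases i <;> fin_cases j <;> erw [Matrix.mul_apply] <;>
    simp [Matrix.mul_apply, Fin.sum_univ_two, hmv0, hmv1, hc, hd, _root_.map_add, _root_.map_mul, _root_.map_neg,
      Complex.conj_conj, ha, hb] <;> ring
end

section
/- SU(2) acts transitively on spheres in ℂ², so the minima of the Higgs potential form a single SU(2)-orbit: for all φ, ψ ∈ (Fin 2 → ℂ) with φ ≠ 0 and ‖φ₁‖² + ‖φ₂‖² = ‖ψ₁‖² + ‖ψ₂‖², there exists β ∈ Matrix.specialUnitaryGroup (Fin 2) ℂ such that β.val.mulVec φ = ψ. -/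
open Matrix

lemma SU2_aux (v : Fin 2 → ℂ) (r : ℝ) (hr : 0 < r)
    (hrv : ‖v 0‖ ^ 2 + ‖v 1‖ ^ 2 = r ^ 2) :
    ∃ β : Matrix.specialUnitaryGroup (Fin 2) ℂ,
      β.val.mulVec ![(r : ℂ), 0] = v := by
  obtain ⟨a, b, hv⟩ : ∃ a b : ℂ, v = ![a, b] := ⟨v 0, v 1, by ext i; fin_cases i <;> rfl⟩
  subst hv
  simp only [Matrix.cons_val_zero, Matrix.cons_val_one, Matrix.head_cons] at hrv ⊢
  have hr0 : (r : ℂ) ≠ 0 := by exact_mod_cast hr.ne'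
  have hkey : a * (starRingEnd ℂ) a + b * (starRingEnd ℂ) b = (r : ℂ) ^ 2 := by
    rw [Complex.mul_conj', Complex.mul_conj']
    exact_mod_cast congrArg (Complex.ofReal) hrv
  set A : Matrix (Fin 2) (Fin 2) ℂ :=
    ![![a / r, -((starRingEnd ℂ) b) / r], ![b / r, (starRingEnd ℂ) a / r]] with hA
  have hmem : A ∈ Matrix.specialUnitaryGroup (Fin 2) ℂ := by
    rw [Matrix.mem_specialUnitaryGroup_iff]
    constructor
    · rw [Matrix.mem_unitaryGroup_iff]
      ext i j
      fin_cases i <;> fin_cases j <;>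
        simp only [Matrix.mul_apply, Fin.sum_univ_two, Matrix.star_apply, Matrix.one_apply] <;>
        simp [hA]
      · field_simp
        linear_combination hkey
      · ring
      · ring
      · field_simp
        linear_combination hkey
    · rw [Matrix.det_fin_two]
      simp [hA]
      field_simp
      linear_combination hkey
  refine ⟨⟨A, hmem⟩, ?_⟩
  ext i
  fin_cases i <;>
    simp [hA, Matrix.mulVec, dotProduct, Fin.sum_univ_two] <;>
    field_simp

/-- SU(2) acts transitively on spheres in ℂ²: any two nonzero vectors of equal norm are related
by a special unitary transformation. -/
theorem SU2_transitive_on_spheres (φ ψ : Fin 2 → ℂ) (hφ : φ ≠ 0)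
    (h : ‖φ 0‖ ^ 2 + ‖φ 1‖ ^ 2 = ‖ψ 0‖ ^ 2 + ‖ψ 1‖ ^ 2) :
    ∃ β : Matrix.specialUnitaryGroup (Fin 2) ℂ, β.val.mulVec φ = ψ := by
  have hpos : 0 < ‖φ 0‖ ^ 2 + ‖φ 1‖ ^ 2 := by
    rcases (by simpa [Function.ne_iff, Fin.exists_fin_two] using hφ : φ 0 ≠ 0 ∨ φ 1 ≠ 0) with h0 | h1
    · have h0' : 0 < ‖φ 0‖ ^ 2 := pow_pos (norm_pos_iff.mpr h0) 2
      nlinarith [sq_nonneg ‖φ 1‖]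
    · have h1' : 0 < ‖φ 1‖ ^ 2 := pow_pos (norm_pos_iff.mpr h1) 2
      nlinarith [sq_nonneg ‖φ 0‖]
  set r := Real.sqrt (‖φ 0‖ ^ 2 + ‖φ 1‖ ^ 2) with hrdef
  have hr : 0 < r := Real.sqrt_pos.mpr hpos
  have hr2 : r ^ 2 = ‖φ 0‖ ^ 2 + ‖φ 1‖ ^ 2 := Real.sq_sqrt hpos.le
  obtain ⟨β₁, hβ₁⟩ := SU2_aux φ r hr hr2.symm
  obtain ⟨β₂, hβ₂⟩ := SU2_aux ψ r hr (by rw [hr2]; exact h.symm)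
  have hu1 : β₁.val ∈ Matrix.unitaryGroup (Fin 2) ℂ :=
    (Matrix.mem_specialUnitaryGroup_iff.mp β₁.2).1
  have hd1 : β₁.val.det = 1 := (Matrix.mem_specialUnitaryGroup_iff.mp β₁.2).2
  have hsmem : star β₁.val ∈ Matrix.specialUnitaryGroup (Fin 2) ℂ := by
    rw [Matrix.mem_specialUnitaryGroup_iff]
    refine ⟨Unitary.star_mem hu1, ?_⟩
    rw [Matrix.star_eq_conjTranspose, Matrix.det_conjTranspose, hd1]
    simp
  refine ⟨β₂ * ⟨star β₁.val, hsmem⟩, ?_⟩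
  have hinv : star β₁.val * β₁.val = 1 := (Unitary.mem_iff.mp hu1).1
  have h1 : (star β₁.val).mulVec φ = ![(r : ℂ), 0] := by
    rw [← hβ₁, Matrix.mulVec_mulVec, hinv, Matrix.one_mulVec]
  show (β₂.val * star β₁.val).mulVec φ = ψ
  rw [← Matrix.mulVec_mulVec, h1, hβ₂]
end

section
/- Gauge covariance of the magnetic Schrödinger equation: let q, ħ, c, m be real constants with ħ, c, m ≠ 0, let A : Fin 3 → ℝ × EuclideanSpace ℝ (Fin 3) → ℝ, φ : ℝ × EuclideanSpace ℝ (Fin 3) → ℝ and ψ : ℝ × EuclideanSpace ℝ (Fin 3) → ℂ be C², and suppose ψ satisfies the magnetic Schrödinger equation with potentials (A, φ): Complex.I·ħ·∂ₜψ = -(ħ²/(2·m))·∑ⱼ Dⱼ(Dⱼψ) + q·φ·ψ pointwise, where Dⱼf := ∂ⱼf - Complex.I·(q/(ħ·c))·Aⱼ·f. Then for every C² function Λ : ℝ × EuclideanSpace ℝ (Fin 3) → ℝ, the gauge-transformed wave function ψ'(t,x) := Complex.exp (Complex.I·q·Λ(t,x)/(ħ·c)) · ψ(t,x) satisfies the magnetic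 Schrödinger equation with the gauge-transformed potentials A'ⱼ := Aⱼ + ∂ⱼΛ and φ' := φ - (1/c)·∂ₜΛ. -/
noncomputable section

/-- Time derivative `∂ₜ f (t, x) = deriv (fun s => f (s, x)) t`. -/
def pt {F : Type*} [NormedAddCommGroup F] [NormedSpace ℝ F]
    (f : ℝ × EuclideanSpace ℝ (Fin 3) → F) (p : ℝ × EuclideanSpace ℝ (Fin 3)) : F :=
  deriv (fun s => f (s, p.2)) p.1

/-- Spatial partial derivative
`∂ⱼ f (t, x) = fderiv ℝ (fun y => f (t, y)) x (EuclideanSpace.single j 1)`. -/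
def px {F : Type*} [NormedAddCommGroup F] [NormedSpace ℝ F] (j : Fin 3)
    (f : ℝ × EuclideanSpace ℝ (Fin 3) → F) (p : ℝ × EuclideanSpace ℝ (Fin 3)) : F :=
  fderiv ℝ (fun y => f (p.1, y)) p.2 (EuclideanSpace.single j 1)

/-- The magnetic covariant derivative `Dⱼ f = ∂ⱼ f - i (q/(ħ c)) Aⱼ f`. -/
def magCovD (q hbar c : ℝ) (A : Fin 3 → ℝ × EuclideanSpace ℝ (Fin 3) → ℝ) (j : Fin 3)
    (f : ℝ × EuclideanSpace ℝ (Fin 3) → ℂ) : ℝ × EuclideanSpace ℝ (Fin 3) → ℂ :=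
  fun p => px j f p - Complex.I * ((q / (hbar * c) : ℝ) : ℂ) * ((A j p : ℝ) : ℂ) * f p

/-- `ψ` satisfies the magnetic Schrödinger equation with potentials `(A, φ)`:
`i ħ ∂ₜψ = -(ħ²/(2m)) ∑ⱼ Dⱼ(Dⱼψ) + q φ ψ`. -/
def IsMagneticSchrodingerSolution (q hbar c m : ℝ)
    (A : Fin 3 → ℝ × EuclideanSpace ℝ (Fin 3) → ℝ)
    (φ : ℝ × EuclideanSpace ℝ (Fin 3) → ℝ)
    (ψ : ℝ × EuclideanSpace ℝ (Fin 3) → ℂ) : Prop :=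
  ∀ p : ℝ × EuclideanSpace ℝ (Fin 3),
    Complex.I * (hbar : ℂ) * pt ψ p
      = -(((hbar ^ 2 / (2 * m)) : ℝ) : ℂ)
            * ∑ j : Fin 3, magCovD q hbar c A j (magCovD q hbar c A j ψ) p
        + (q : ℂ) * ((φ p : ℝ) : ℂ) * ψ p

abbrev E3 := EuclideanSpace ℝ (Fin 3)
abbrev P3 := ℝ × E3

lemma diff_sliceX {F : Type*} [NormedAddCommGroup F] [NormedSpace ℝ F] {f : P3 → F}
    (hf : Differentiable ℝ f) (t : ℝ) : Differentiable ℝ (fun y : E3 => f (t, y)) :=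
  hf.comp ((differentiable_const t).prodMk differentiable_id)

lemma diff_sliceT {F : Type*} [NormedAddCommGroup F] [NormedSpace ℝ F] {f : P3 → F}
    (hf : Differentiable ℝ f) (x : E3) : Differentiable ℝ (fun s : ℝ => f (s, x)) :=
  hf.comp (differentiable_id.prodMk (differentiable_const x))

lemma px_mul {f g : P3 → ℂ} {p : P3} (j : Fin 3)
    (hf : DifferentiableAt ℝ (fun y => f (p.1, y)) p.2)
    (hg : DifferentiableAt ℝ (fun y => g (p.1, y)) p.2) :
    px j (fun p => f p * g p) p = px j f p * g p + f p * px j g p := by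
  simp only [px]
  rw [fderiv_fun_mul hf hg]
  simp
  ring

lemma pt_mul {f g : P3 → ℂ} {p : P3}
    (hf : DifferentiableAt ℝ (fun s => f (s, p.2)) p.1)
    (hg : DifferentiableAt ℝ (fun s => g (s, p.2)) p.1) :
    pt (fun p => f p * g p) p = pt f p * g p + f p * pt g p := by
  simp only [pt]
  rw [deriv_fun_mul hf hg]

lemma px_eq_fderiv {f : P3 → ℂ} {p : P3} (j : Fin 3) (hf : DifferentiableAt ℝ f p) :
    px j f p = fderiv ℝ f p (0, EuclideanSpace.single j 1) := by
  have hmk : HasFDerivAt (fun y : E3 => (p.1, y)) (ContinuousLinearMap.inr ℝ ℝ E3) p.2 :=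
    hasFDerivAt_prodMk_right p.1 p.2
  have h := (hf.hasFDerivAt.comp p.2 hmk)
  simp only [px]
  have h2 : HasFDerivAt (fun y : E3 => f (p.1, y))
      ((fderiv ℝ f p).comp (ContinuousLinearMap.inr ℝ ℝ E3)) p.2 := h
  rw [h2.fderiv]
  rfl

lemma px_exp (q hbar c : ℝ) {Λ : P3 → ℝ} (hΛ : ContDiff ℝ 2 Λ) (j : Fin 3) (p : P3) :
    px j (fun p => Complex.exp (Complex.I * (q:ℂ) * ((Λ p : ℝ):ℂ) / ((hbar:ℂ)*(c:ℂ)))) p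
      = Complex.exp (Complex.I * (q:ℂ) * ((Λ p : ℝ):ℂ) / ((hbar:ℂ)*(c:ℂ)))
        * (Complex.I * ((q / (hbar*c) : ℝ):ℂ) * ((px j Λ p : ℝ):ℂ)) := by
  have hΛs : DifferentiableAt ℝ (fun y => Λ (p.1, y)) p.2 :=
    (diff_sliceX (hΛ.differentiable two_ne_zero) p.1).differentiableAt
  have h1 : HasFDerivAt (fun y : E3 => ((Λ (p.1, y) : ℝ):ℂ))
      (Complex.ofRealCLM.comp (fderiv ℝ (fun y => Λ (p.1, y)) p.2)) p.2 :=
    (Complex.ofRealCLM.hasFDerivAt).comp p.2 hΛs.hasFDerivAt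
  have h2 := (h1.const_mul (Complex.I * (q:ℂ) / ((hbar:ℂ)*(c:ℂ)))).cexp
  have hfun : (fun y : E3 =>
        Complex.exp (Complex.I * (q:ℂ) * ((Λ (p.1,y) : ℝ):ℂ) / ((hbar:ℂ)*(c:ℂ))))
      = fun y : E3 =>
        Complex.exp ((Complex.I * (q:ℂ) / ((hbar:ℂ)*(c:ℂ))) * ((Λ (p.1,y) : ℝ):ℂ)) := by
    funext y; congr 1; ring
  simp only [px]
  rw [hfun, h2.fderiv]
  simp only [ContinuousLinearMap.smul_apply, ContinuousLinearMap.comp_apply,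
    Complex.ofRealCLM_apply, smul_eq_mul]
  rw [show (Complex.I * (q:ℂ) / ((hbar:ℂ)*(c:ℂ))) * ((Λ p : ℝ):ℂ)
      = Complex.I * (q:ℂ) * ((Λ p : ℝ):ℂ) / ((hbar:ℂ)*(c:ℂ)) from by ring]
  push_cast
  ring

lemma pt_exp (q hbar c : ℝ) {Λ : P3 → ℝ} (hΛ : ContDiff ℝ 2 Λ) (p : P3) :
    pt (fun p => Complex.exp (Complex.I * (q:ℂ) * ((Λ p : ℝ):ℂ) / ((hbar:ℂ)*(c:ℂ)))) p
      = Complex.exp (Complex.I * (q:ℂ) * ((Λ p : ℝ):ℂ) / ((hbar:ℂ)*(c:ℂ)))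
        * (Complex.I * ((q / (hbar*c) : ℝ):ℂ) * ((pt Λ p : ℝ):ℂ)) := by
  have hΛs : DifferentiableAt ℝ (fun s => Λ (s, p.2)) p.1 :=
    (diff_sliceT (hΛ.differentiable two_ne_zero) p.2).differentiableAt
  have h1 : HasDerivAt (fun s : ℝ => ((Λ (s, p.2) : ℝ):ℂ))
      ((deriv (fun s => Λ (s, p.2)) p.1 : ℝ):ℂ) p.1 := hΛs.hasDerivAt.ofReal_comp
  have h2 := (h1.const_mul (Complex.I * (q:ℂ) / ((hbar:ℂ)*(c:ℂ)))).cexp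
  have hfun : (fun s : ℝ =>
        Complex.exp (Complex.I * (q:ℂ) * ((Λ (s, p.2) : ℝ):ℂ) / ((hbar:ℂ)*(c:ℂ))))
      = fun s : ℝ =>
        Complex.exp ((Complex.I * (q:ℂ) / ((hbar:ℂ)*(c:ℂ))) * ((Λ (s, p.2) : ℝ):ℂ)) := by
    funext s; congr 1; ring
  simp only [pt]
  rw [hfun, h2.deriv]
  rw [show (Complex.I * (q:ℂ) / ((hbar:ℂ)*(c:ℂ))) * ((Λ p : ℝ):ℂ)
      = Complex.I * (q:ℂ) * ((Λ p : ℝ):ℂ) / ((hbar:ℂ)*(c:ℂ)) from by ring]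
  push_cast
  ring

lemma exp_diff (q hbar c : ℝ) {Λ : P3 → ℝ} (hΛ : ContDiff ℝ 2 Λ) :
    Differentiable ℝ (fun p : P3 =>
      Complex.exp (Complex.I * (q:ℂ) * ((Λ p : ℝ):ℂ) / ((hbar:ℂ)*(c:ℂ)))) := by
  have h0 : Differentiable ℝ (fun p : P3 => ((Λ p : ℝ):ℂ)) := fun p =>
    (Complex.ofRealCLM.differentiableAt).comp p ((hΛ.differentiable two_ne_zero) p)
  have h : Differentiable ℝ (fun p : P3 =>
      Complex.I * (q:ℂ) * ((Λ p : ℝ):ℂ) / ((hbar:ℂ)*(c:ℂ))) := by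
    simp only [div_eq_mul_inv]
    exact (h0.const_mul (Complex.I * (q:ℂ))).mul_const (((hbar:ℂ)*(c:ℂ))⁻¹)
  exact h.cexp

lemma covD_key (q hbar c : ℝ) (A : Fin 3 → P3 → ℝ) {Λ : P3 → ℝ} (hΛ : ContDiff ℝ 2 Λ)
    {f : P3 → ℂ} (hf : ∀ (t : ℝ) (x : E3), DifferentiableAt ℝ (fun y => f (t, y)) x)
    (j : Fin 3) (p : P3) :
    magCovD q hbar c (fun j p => A j p + px j Λ p) j
      (fun p => Complex.exp (Complex.I * (q:ℂ) * ((Λ p : ℝ):ℂ) / ((hbar:ℂ)*(c:ℂ))) * f p) p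
    = Complex.exp (Complex.I * (q:ℂ) * ((Λ p : ℝ):ℂ) / ((hbar:ℂ)*(c:ℂ)))
        * magCovD q hbar c A j f p := by
  have he : DifferentiableAt ℝ (fun y : E3 =>
      Complex.exp (Complex.I * (q:ℂ) * ((Λ (p.1, y) : ℝ):ℂ) / ((hbar:ℂ)*(c:ℂ)))) p.2 :=
    (diff_sliceX (exp_diff q hbar c hΛ) p.1).differentiableAt
  simp only [magCovD]
  rw [px_mul j he (hf p.1 p.2), px_exp q hbar c hΛ j p]
  push_cast
  ring

lemma covD_diff (q hbar c : ℝ) {A : Fin 3 → P3 → ℝ} (hA : ∀ j, ContDiff ℝ 2 (A j))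
    {ψ : P3 → ℂ} (hψ : ContDiff ℝ 2 ψ) (j : Fin 3) :
    Differentiable ℝ (magCovD q hbar c A j ψ) := by
  have hfun : magCovD q hbar c A j ψ = fun p =>
      (fderiv ℝ ψ p) ((0 : ℝ), EuclideanSpace.single j 1)
        - Complex.I * ((q / (hbar * c) : ℝ) : ℂ) * ((A j p : ℝ) : ℂ) * ψ p := by
    funext p
    simp only [magCovD]
    rw [px_eq_fderiv j ((hψ.differentiable two_ne_zero).differentiableAt)]
  rw [hfun]
  have h1 : ContDiff ℝ 1 (fderiv ℝ ψ) := hψ.fderiv_right (by norm_num)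
  exact ((h1.clm_apply contDiff_const).sub
    ((contDiff_const.mul (Complex.ofRealCLM.contDiff.comp ((hA j).of_le one_le_two))).mul
      (hψ.of_le one_le_two))).differentiable one_ne_zero

/-- Gauge covariance of the magnetic Schrödinger equation: if `ψ` solves the equation with
potentials `(A, φ)`, then for any C² gauge function `Λ` the transformed wave function
`ψ' = exp(i q Λ/(ħ c)) ψ` solves it with the potentials `A'ⱼ = Aⱼ + ∂ⱼΛ`,
`φ' = φ - (1/c) ∂ₜΛ`. -/
theorem magnetic_schrodinger_gauge_covariance
    (q hbar c m : ℝ) (hhbar : hbar ≠ 0) (hc : c ≠ 0) (hm : m ≠ 0)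
    (A : Fin 3 → ℝ × EuclideanSpace ℝ (Fin 3) → ℝ) (hA : ∀ j, ContDiff ℝ 2 (A j))
    (φ : ℝ × EuclideanSpace ℝ (Fin 3) → ℝ) (hφ : ContDiff ℝ 2 φ)
    (ψ : ℝ × EuclideanSpace ℝ (Fin 3) → ℂ) (hψ : ContDiff ℝ 2 ψ)
    (hsol : IsMagneticSchrodingerSolution q hbar c m A φ ψ) :
    ∀ Λ : ℝ × EuclideanSpace ℝ (Fin 3) → ℝ, ContDiff ℝ 2 Λ →
      IsMagneticSchrodingerSolution q hbar c m
        (fun j p => A j p + px j Λ p)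
        (fun p => φ p - (1 / c) * pt Λ p)
        (fun p => Complex.exp (Complex.I * (q : ℂ) * ((Λ p : ℝ) : ℂ) / ((hbar : ℂ) * (c : ℂ)))
          * ψ p) := by
  intro Λ hΛ
  unfold IsMagneticSchrodingerSolution at hsol ⊢
  intro p
  have hψd : Differentiable ℝ ψ := hψ.differentiable two_ne_zero
  have hψslice : ∀ (t : ℝ) (x : E3), DifferentiableAt ℝ (fun y => ψ (t, y)) x :=
    fun t x => (diff_sliceX hψd t).differentiableAt
  have hDd : ∀ j, Differentiable ℝ (magCovD q hbar c A j ψ) :=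
    fun j => covD_diff q hbar c hA hψ j
  have hsum : ∑ j : Fin 3,
      magCovD q hbar c (fun j p => A j p + px j Λ p) j
        (magCovD q hbar c (fun j p => A j p + px j Λ p) j
          (fun p => Complex.exp (Complex.I * (q:ℂ) * ((Λ p : ℝ):ℂ) / ((hbar:ℂ)*(c:ℂ)))
            * ψ p)) p
      = Complex.exp (Complex.I * (q:ℂ) * ((Λ p : ℝ):ℂ) / ((hbar:ℂ)*(c:ℂ)))
        * ∑ j : Fin 3, magCovD q hbar c A j (magCovD q hbar c A j ψ) p := by
    rw [Finset.mul_sum]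
    refine Finset.sum_congr rfl fun j _ => ?_
    have h1 : magCovD q hbar c (fun j p => A j p + px j Λ p) j
        (fun p => Complex.exp (Complex.I * (q:ℂ) * ((Λ p : ℝ):ℂ) / ((hbar:ℂ)*(c:ℂ))) * ψ p)
        = fun p => Complex.exp (Complex.I * (q:ℂ) * ((Λ p : ℝ):ℂ) / ((hbar:ℂ)*(c:ℂ)))
            * magCovD q hbar c A j ψ p :=
      funext fun p => covD_key q hbar c A hΛ hψslice j p
    rw [h1]
    exact covD_key q hbar c A hΛ
      (fun t x => (diff_sliceX (hDd j) t).differentiableAt) j p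
  have hes : DifferentiableAt ℝ (fun s : ℝ =>
      Complex.exp (Complex.I * (q:ℂ) * ((Λ (s, p.2) : ℝ):ℂ) / ((hbar:ℂ)*(c:ℂ)))) p.1 :=
    (diff_sliceT (exp_diff q hbar c hΛ) p.2).differentiableAt
  have hps : DifferentiableAt ℝ (fun s : ℝ => ψ (s, p.2)) p.1 :=
    (diff_sliceT hψd p.2).differentiableAt
  rw [hsum, pt_mul hes hps, pt_exp q hbar c hΛ p]
  have hb : (hbar : ℂ) ≠ 0 := Complex.ofReal_ne_zero.mpr hhbar
  have hcc : (c : ℂ) ≠ 0 := Complex.ofReal_ne_zero.mpr hc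
  have hg : Complex.I * (hbar:ℂ) * (Complex.I * ((q:ℂ)/((hbar:ℂ)*(c:ℂ))))
      = -((q:ℂ)/(c:ℂ)) := by
    field_simp
    linear_combination (q:ℂ) * Complex.I_sq
  have hs := hsol p
  push_cast at hs ⊢
  linear_combination (Complex.exp (Complex.I * (q:ℂ) * ((Λ p : ℝ):ℂ) / ((hbar:ℂ)*(c:ℂ)))) * hs
    + (((pt Λ p : ℝ):ℂ) * Complex.exp (Complex.I * (q:ℂ) * ((Λ p : ℝ):ℂ) / ((hbar:ℂ)*(c:ℂ)))
        * ψ p) * hg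
end
end

section
/- Residual U(1) transformation of the dressed electroweak gauge field: let E be a finite-dimensional real normed vector space, g ≠ 0 a real number, let B₃, W⁻, W⁺ : E → (E →L[ℝ] ℂ) be smooth, and define B : E → (E →L[ℝ] Matrix (Fin 2) (Fin 2) ℂ)-valued 1-form by B x v := ![![B₃ x v, W⁻ x v], ![W⁺ x v, -(B₃ x v)]]. Let α : E → ℂ be smooth with |α x| = 1 for all x, and set α̃ x := ![![α x, 0], ![0, (α x)⁻¹]]. Then for all x ∈ E and v ∈ E, (α̃ x)⁻¹ * (B x v) * (α̃ x) + (1/g) • ((α̃ x)⁻¹ * (fderiv ℝ α̃ x v)) = ![![B₃ x v + (1/g)·(α x)⁻¹·(fderiv ℝ α x v), (α x)⁻²·(W⁻ x v)], ![(α x)²·(W⁺ x v), -(B₃ x v + (1/g)·(α x)⁻¹·(fderiv ℝ α x v))]]; that is, under the residual U(1) symmetry the component B₃ transforms as an Abelian gauge potential while W∓ carry charge ∓2. -/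
open Matrix

attribute [local instance] Matrix.linftyOpNormedRing Matrix.linftyOpNormedAlgebra

variable {E : Type*} [NormedAddCommGroup E] [NormedSpace ℝ E] [FiniteDimensional ℝ E]

/-- The 2×2 complex matrix `![![a, b], ![c, d]]`. -/
def mat2 (a b c d : ℂ) : Matrix (Fin 2) (Fin 2) ℂ := ![![a, b], ![c, d]]

/-- The embedding `α ↦ α̃ = diag(α, α⁻¹)` of the residual U(1) into 2×2 complex matrices. -/
noncomputable def diagEmbed (α : E → ℂ) (x : E) : Matrix (Fin 2) (Fin 2) ℂ :=
  mat2 (α x) 0 0 ((α x)⁻¹)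

theorem mat2_eq (a b c d : ℂ) : mat2 a b c d = Matrix.of ![![a, b], ![c, d]] := rfl

/-- Residual U(1) transformation of the dressed electroweak gauge field
`B x v = ![![B₃ x v, W⁻ x v], ![W⁺ x v, -B₃ x v]]`: under
`B ↦ α̃⁻¹ B α̃ + (1/g) α̃⁻¹ dα̃`, the component `B₃` transforms as an Abelian gauge
potential while `W∓` carry charge `∓2`. -/
theorem dressed_electroweak_residual_U1
    (g : ℝ) (hg : g ≠ 0)
    (B₃ Wminus Wplus : E → (E →L[ℝ] ℂ))
    (hB₃ : ContDiff ℝ (⊤ : ℕ∞) B₃) (hWm : ContDiff ℝ (⊤ : ℕ∞) Wminus) (hWp : ContDiff ℝ (⊤ : ℕ∞) Wplus)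
    (α : E → ℂ) (hα : ContDiff ℝ (⊤ : ℕ∞) α) (hα1 : ∀ x, ‖α x‖ = 1) :
    ∀ x v : E,
      (diagEmbed α x)⁻¹
            * mat2 (B₃ x v) (Wminus x v) (Wplus x v) (-(B₃ x v))
            * diagEmbed α x
          + (1 / g) • ((diagEmbed α x)⁻¹ * fderiv ℝ (diagEmbed α) x v)
        = mat2 (B₃ x v + (1 / g : ℂ) * (α x)⁻¹ * fderiv ℝ α x v)
            (((α x)⁻¹) ^ 2 * Wminus x v)
            ((α x) ^ 2 * Wplus x v)
            (-(B₃ x v + (1 / g : ℂ) * (α x)⁻¹ * fderiv ℝ α x v)) := by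
  intro x v
  have hα0 : α x ≠ 0 := by
    intro h
    have := hα1 x
    rw [h] at this
    simp at this
  -- derivative of diagEmbed
  have hdα : DifferentiableAt ℝ α x := (hα.differentiable (by simp)) x
  have hinv : HasFDerivAt (fun y => (α y)⁻¹)
      ((-(ContinuousLinearMap.mulLeftRight ℝ ℂ (α x)⁻¹ (α x)⁻¹)).comp (fderiv ℝ α x)) x :=
    (hasFDerivAt_inv' hα0).comp x hdα.hasFDerivAt
  have heq : diagEmbed α = fun y => α y • mat2 1 0 0 0 + (α y)⁻¹ • mat2 0 0 0 1 := by
    funext y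
    ext i j
    fin_cases i <;> fin_cases j <;>
      simp [diagEmbed, mat2_eq, Matrix.add_apply, Matrix.smul_apply]
  have hD : HasFDerivAt (diagEmbed α)
      ((fderiv ℝ α x).smulRight (mat2 1 0 0 0) +
        ((-(ContinuousLinearMap.mulLeftRight ℝ ℂ (α x)⁻¹ (α x)⁻¹)).comp
          (fderiv ℝ α x)).smulRight (mat2 0 0 0 1)) x := by
    rw [heq]
    exact (hdα.hasFDerivAt.smul_const _).add (hinv.smul_const _)
  have hDval : fderiv ℝ (diagEmbed α) x v =
      (fderiv ℝ α x v) • mat2 1 0 0 0 +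
        (-((α x)⁻¹ * fderiv ℝ α x v * (α x)⁻¹)) • mat2 0 0 0 1 := by
    rw [hD.fderiv]
    simp [ContinuousLinearMap.smulRight_apply]
  -- inverse of diagEmbed
  have hinvmat : (diagEmbed α x)⁻¹ = mat2 ((α x)⁻¹) 0 0 (α x) := by
    refine inv_eq_left_inv ?_
    ext i j
    fin_cases i <;> fin_cases j <;>
      simp [diagEmbed, mat2_eq, Matrix.mul_apply, Fin.sum_univ_two, Matrix.one_apply,
        inv_mul_cancel₀ hα0, mul_inv_cancel₀ hα0]
  rw [hinvmat, hDval]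
  have hg' : (g : ℂ) ≠ 0 := by exact_mod_cast hg
  ext i j
  fin_cases i <;> fin_cases j <;>
    · simp [mat2_eq, diagEmbed, Matrix.mul_apply, Fin.sum_univ_two, Matrix.add_apply,
        Matrix.smul_apply, Complex.real_smul]
      try push_cast
      try field_simp
      try ring
      try tauto
end

section
/- The stabilizer of a nonzero vector under the fundamental action of SU(3) is isomorphic to SU(2): for every φ ∈ (Fin 3 → ℂ) with φ ≠ 0, the subgroup {U ∈ Matrix.specialUnitaryGroup (Fin 3) ℂ | U.val.mulVec φ = φ} is isomorphic as a group (via a MulEquiv) to Matrix.specialUnitaryGroup (Fin 2) ℂ. -/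
open Matrix

noncomputable section SU3StabAux

/-- The distinguished third basis vector of `ℂ³`. -/
def eVec : Fin 3 → ℂ := Pi.single 2 1

lemma eVec_def : eVec = Pi.single 2 1 := rfl

/-- Embedding of a `2 × 2` matrix as the upper-left block of a `3 × 3` matrix. -/
def emb (A : Matrix (Fin 2) (Fin 2) ℂ) : Matrix (Fin 3) (Fin 3) ℂ :=
  !![A 0 0, A 0 1, 0; A 1 0, A 1 1, 0; 0, 0, 1]

/-- The upper-left `2 × 2` block of a `3 × 3` matrix. -/
def blk (M : Matrix (Fin 3) (Fin 3) ℂ) : Matrix (Fin 2) (Fin 2) ℂ :=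
  Matrix.of fun i j => M i.castSucc j.castSucc

lemma emb_mul (A B : Matrix (Fin 2) (Fin 2) ℂ) : emb (A * B) = emb A * emb B := by
  ext i j
  fin_cases i <;> fin_cases j <;>
    simp [emb, Matrix.mul_apply, Fin.sum_univ_three, Fin.sum_univ_two]

lemma star_emb (A : Matrix (Fin 2) (Fin 2) ℂ) : star (emb A) = emb (star A) := by
  ext i j
  fin_cases i <;> fin_cases j <;>
    simp [emb, Matrix.star_apply, Fin.ext_iff]

lemma emb_one : emb 1 = 1 := by
  ext i j
  fin_cases i <;> fin_cases j <;> rfl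

lemma det_emb (A : Matrix (Fin 2) (Fin 2) ℂ) : (emb A).det = A.det := by
  rw [Matrix.det_fin_three, Matrix.det_fin_two]
  simp [emb]

lemma blk_emb (A : Matrix (Fin 2) (Fin 2) ℂ) : blk (emb A) = A := by
  ext i j
  fin_cases i <;> fin_cases j <;>
    simp [emb, blk, show Fin.castAdd 1 (0 : Fin 2) = 0 from rfl,
      show Fin.castAdd 1 (1 : Fin 2) = 1 from rfl]

lemma emb_mulVec_eVec (A : Matrix (Fin 2) (Fin 2) ℂ) : (emb A).mulVec eVec = eVec := by
  funext i
  fin_cases i <;>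
    simp [emb, eVec, Matrix.mulVec, dotProduct, Fin.sum_univ_three, Pi.single_apply]

lemma emb_inj {A B : Matrix (Fin 2) (Fin 2) ℂ} (h : emb A = emb B) : A = B := by
  rw [← blk_emb A, ← blk_emb B, h]

lemma emb_mem {A : Matrix (Fin 2) (Fin 2) ℂ} (hA : A ∈ Matrix.specialUnitaryGroup (Fin 2) ℂ) :
    emb A ∈ Matrix.specialUnitaryGroup (Fin 3) ℂ := by
  rw [Matrix.mem_specialUnitaryGroup_iff] at hA ⊢
  refine ⟨⟨?_, ?_⟩, ?_⟩
  · rw [star_emb, ← emb_mul, hA.1.1, emb_one]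
  · rw [star_emb, ← emb_mul, hA.1.2, emb_one]
  · rw [det_emb, hA.2]

lemma blk_mem {M : Matrix (Fin 3) (Fin 3) ℂ} (hM : M ∈ Matrix.specialUnitaryGroup (Fin 3) ℂ)
    (h : M = emb (blk M)) : blk M ∈ Matrix.specialUnitaryGroup (Fin 2) ℂ := by
  rw [Matrix.mem_specialUnitaryGroup_iff] at hM ⊢
  refine ⟨⟨emb_inj ?_, emb_inj ?_⟩, ?_⟩
  · rw [emb_mul, ← star_emb, ← h, hM.1.1, emb_one]
  · rw [emb_mul, ← star_emb, ← h, hM.1.2, emb_one]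
  · rw [← det_emb, ← h, hM.2]

lemma eq_emb_blk {U : Matrix (Fin 3) (Fin 3) ℂ} (hU : U ∈ Matrix.unitaryGroup (Fin 3) ℂ)
    (h : U.mulVec eVec = eVec) : U = emb (blk U) := by
  have hcol : ∀ i, U i 2 = eVec i := by
    intro i
    have := congr_fun h i
    simpa [eVec, Matrix.mulVec, dotProduct, Fin.sum_univ_three, Pi.single_apply,
      Fin.ext_iff] using this
  have h02 : U 0 2 = 0 := by simpa [eVec, Pi.single_apply, Fin.ext_iff] using hcol 0
  have h12 : U 1 2 = 0 := by simpa [eVec, Pi.single_apply, Fin.ext_iff] using hcol 1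
  have h22 : U 2 2 = 1 := by simpa [eVec, Pi.single_apply] using hcol 2
  have hrow : U 2 0 = 0 ∧ U 2 1 = 0 := by
    have h1 : (U * star U) 2 2 = 1 := by rw [hU.2]; simp
    rw [Matrix.mul_apply, Fin.sum_univ_three] at h1
    simp only [Matrix.star_apply, h22, RCLike.star_def, _root_.map_one, mul_one] at h1
    have hns : (Complex.normSq (U 2 0) : ℂ) + (Complex.normSq (U 2 1) : ℂ) = 0 := by
      rw [← Complex.mul_conj, ← Complex.mul_conj]
      linear_combination h1
    have hr : Complex.normSq (U 2 0) + Complex.normSq (U 2 1) = 0 := by exact_mod_cast hns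
    have hn0 := Complex.normSq_nonneg (U 2 0)
    have hn1 := Complex.normSq_nonneg (U 2 1)
    constructor <;> rw [← Complex.normSq_eq_zero] <;> linarith
  ext i j
  fin_cases i <;> fin_cases j <;>
    simp [emb, blk, h02, h12, h22, hrow.1, hrow.2,
      show Fin.castAdd 1 (0 : Fin 2) = 0 from rfl, show Fin.castAdd 1 (1 : Fin 2) = 1 from rfl]

end SU3StabAux

/-- The stabilizer of a vector `φ ∈ ℂ³` inside `SU(3)` (as a submonoid of the group `SU(3)`;
since `SU(3)` consists of invertible matrices, it is in fact a subgroup). -/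
def stabilizerSU3 (φ : Fin 3 → ℂ) : Submonoid (Matrix.specialUnitaryGroup (Fin 3) ℂ) where
  carrier := {U | U.val.mulVec φ = φ}
  one_mem' := by
    show ((1 : Matrix.specialUnitaryGroup (Fin 3) ℂ) : Matrix (Fin 3) (Fin 3) ℂ).mulVec φ = φ
    simp [Matrix.one_mulVec]
  mul_mem' := by
    intro a b ha hb
    show ((a * b : Matrix.specialUnitaryGroup (Fin 3) ℂ) : Matrix (Fin 3) (Fin 3) ℂ).mulVec φ = φ
    have : ((a * b : Matrix.specialUnitaryGroup (Fin 3) ℂ) : Matrix (Fin 3) (Fin 3) ℂ)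
        = (a : Matrix (Fin 3) (Fin 3) ℂ) * (b : Matrix (Fin 3) (Fin 3) ℂ) := rfl
    rw [this, ← Matrix.mulVec_mulVec]
    rw [show (b : Matrix (Fin 3) (Fin 3) ℂ).mulVec φ = φ from hb,
      show (a : Matrix (Fin 3) (Fin 3) ℂ).mulVec φ = φ from ha]

noncomputable section SU3StabAux2

lemma mem_stabilizerSU3_iff {φ : Fin 3 → ℂ} {U : Matrix.specialUnitaryGroup (Fin 3) ℂ} :
    U ∈ stabilizerSU3 φ ↔ U.val.mulVec φ = φ := Iff.rfl

/-- `SU(2)` is isomorphic to the stabilizer of `eVec`. -/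
def embIso : Matrix.specialUnitaryGroup (Fin 2) ℂ ≃* stabilizerSU3 eVec where
  toFun A := ⟨⟨emb A.val, emb_mem A.2⟩, emb_mulVec_eVec A.val⟩
  invFun U := ⟨blk U.val.val,
    blk_mem U.val.2 (eq_emb_blk U.val.2.1 U.2)⟩
  left_inv A := Subtype.ext (blk_emb A.val)
  right_inv U := Subtype.ext (Subtype.ext (eq_emb_blk U.val.2.1 U.2).symm)
  map_mul' A B := Subtype.ext (Subtype.ext (emb_mul A.val B.val))

lemma star_mem_SU3 {M : Matrix (Fin 3) (Fin 3) ℂ}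
    (h : M ∈ Matrix.specialUnitaryGroup (Fin 3) ℂ) :
    star M ∈ Matrix.specialUnitaryGroup (Fin 3) ℂ := by
  rw [Matrix.mem_specialUnitaryGroup_iff] at h ⊢
  refine ⟨Unitary.star_mem h.1, ?_⟩
  rw [Matrix.star_eq_conjTranspose, Matrix.det_conjTranspose, h.2, star_one]

/-- Conjugation by `g` identifies the stabilizer of `ψ` with the stabilizer of `g ψ`. -/
def conjEquiv (ψ : Fin 3 → ℂ) (g : Matrix.specialUnitaryGroup (Fin 3) ℂ) :
    stabilizerSU3 ψ ≃* stabilizerSU3 (g.val.mulVec ψ) := by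
  have h1 : star g.val * g.val = 1 := g.2.1.1
  have h2 : g.val * star g.val = 1 := g.2.1.2
  have hc1 : ∀ X : Matrix (Fin 3) (Fin 3) ℂ, star g.val * (g.val * X) = X := fun X => by
    rw [← Matrix.mul_assoc, h1, Matrix.one_mul]
  have hc2 : ∀ X : Matrix (Fin 3) (Fin 3) ℂ, g.val * (star g.val * X) = X := fun X => by
    rw [← Matrix.mul_assoc, h2, Matrix.one_mul]
  exact
  { toFun := fun U => ⟨⟨g.val * U.val.val * star g.val,
      mul_mem (mul_mem g.2 U.val.2) (star_mem_SU3 g.2)⟩, by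
        show (g.val * U.val.val * star g.val).mulVec (g.val.mulVec ψ) = g.val.mulVec ψ
        rw [Matrix.mulVec_mulVec, Matrix.mul_assoc, Matrix.mul_assoc, h1, Matrix.mul_one,
          ← Matrix.mulVec_mulVec, U.2]⟩
    invFun := fun U => ⟨⟨star g.val * U.val.val * g.val,
      mul_mem (mul_mem (star_mem_SU3 g.2) U.val.2) g.2⟩, by
        show (star g.val * U.val.val * g.val).mulVec ψ = ψ
        rw [← Matrix.mulVec_mulVec, ← Matrix.mulVec_mulVec, U.2, Matrix.mulVec_mulVec, h1,
          Matrix.one_mulVec]⟩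
    left_inv := fun U => Subtype.ext (Subtype.ext (by
      show star g.val * (g.val * U.val.val * star g.val) * g.val = U.val.val
      rw [Matrix.mul_assoc (g.val) _ _, hc1, Matrix.mul_assoc, h1, Matrix.mul_one]))
    right_inv := fun U => Subtype.ext (Subtype.ext (by
      show g.val * (star g.val * U.val.val * g.val) * star g.val = U.val.val
      rw [Matrix.mul_assoc (star g.val) _ _, hc2, Matrix.mul_assoc, h2, Matrix.mul_one]))
    map_mul' := fun U V => Subtype.ext (Subtype.ext (by
      show g.val * (U.val.val * V.val.val) * star g.val
          = (g.val * U.val.val * star g.val) * (g.val * V.val.val * star g.val)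
      simp only [Matrix.mul_assoc, hc1, hc2])) }

lemma stabilizerSU3_smul (c : ℂ) (hc : c ≠ 0) (φ : Fin 3 → ℂ) :
    stabilizerSU3 (c • φ) = stabilizerSU3 φ := by
  refine Submonoid.ext fun U => ?_
  rw [mem_stabilizerSU3_iff, mem_stabilizerSU3_iff, Matrix.mulVec_smul]
  exact ⟨fun h => smul_right_injective (Fin 3 → ℂ) hc h, fun h => by rw [h]⟩

end SU3StabAux2

noncomputable section SU3StabAux3

lemma exists_SU3_mulVec_eq (φ : Fin 3 → ℂ) (hφ : φ ≠ 0) :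
    ∃ (g : Matrix.specialUnitaryGroup (Fin 3) ℂ) (c : ℂ),
      c ≠ 0 ∧ g.val.mulVec eVec = c • φ := by
  set ψ : EuclideanSpace ℂ (Fin 3) := (WithLp.equiv 2 (Fin 3 → ℂ)).symm φ with hψdef
  have hψ0 : ψ ≠ 0 := by
    simpa [hψdef] using hφ
  have hu1 : ‖(‖ψ‖⁻¹ • ψ : EuclideanSpace ℂ (Fin 3))‖ = 1 := by
    rw [norm_smul, norm_inv, norm_norm, inv_mul_cancel₀ (norm_ne_zero_iff.mpr hψ0)]
  have hON : Orthonormal ℂ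
      (({2} : Set (Fin 3)).restrict fun _ : Fin 3 => (‖ψ‖⁻¹ • ψ : EuclideanSpace ℂ (Fin 3))) := by
    constructor
    · intro i; exact hu1
    · intro i j hij
      refine absurd (Subtype.ext ?_) hij
      have hi := i.2; have hj := j.2
      simp only [Set.mem_singleton_iff] at hi hj
      rw [hi, hj]
  have hcard : Module.finrank ℂ (EuclideanSpace ℂ (Fin 3)) = Fintype.card (Fin 3) := by
    simp [finrank_euclideanSpace]
  obtain ⟨b, hb⟩ := hON.exists_orthonormalBasis_extension_of_card_eq hcard
  have hb2 : b 2 = ‖ψ‖⁻¹ • ψ := hb 2 rfl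
  set M : Matrix (Fin 3) (Fin 3) ℂ :=
    Matrix.of fun i j => (WithLp.equiv 2 (Fin 3 → ℂ)) (b j) i with hMdef
  have hMunit : M ∈ Matrix.unitaryGroup (Fin 3) ℂ := by
    rw [Matrix.mem_unitaryGroup_iff']
    ext j k
    rw [Matrix.mul_apply, Matrix.one_apply]
    have hinner := (orthonormal_iff_ite (𝕜 := ℂ)).mp b.orthonormal j k
    rw [PiLp.inner_apply] at hinner
    simp only [RCLike.inner_apply] at hinner
    rw [← hinner]
    refine Finset.sum_congr rfl fun i _ => ?_
    simp [hMdef, Matrix.star_apply]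
    exact mul_comm _ _
  set d : ℂ := M.det with hddef
  have hd : d ∈ unitary ℂ := Matrix.det_of_mem_unitary hMunit
  set D : Matrix (Fin 3) (Fin 3) ℂ :=
    Matrix.diagonal (fun j => if j = 0 then star d else 1) with hDdef
  have hDunit : D ∈ Matrix.unitaryGroup (Fin 3) ℂ := by
    rw [Matrix.mem_unitaryGroup_iff']
    have h1 : star D * D = Matrix.diagonal (fun i : Fin 3 =>
        star (if i = 0 then star d else 1) * if i = 0 then star d else 1) := by
      rw [hDdef, Matrix.star_eq_conjTranspose, Matrix.diagonal_conjTranspose,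
        Matrix.diagonal_mul_diagonal]
      rfl
    rw [h1, show (fun i : Fin 3 =>
        star (if i = 0 then star d else 1) * if i = 0 then star d else 1)
        = fun _ => (1 : ℂ) from funext fun i => by
          by_cases h : i = 0
          · simp only [if_pos h, star_star]; exact hd.2
          · simp only [if_neg h, star_one, one_mul], Matrix.diagonal_one]
  have hdet : (M * D).det = 1 := by
    rw [Matrix.det_mul, Matrix.det_diagonal, Fin.prod_univ_three]
    simp
    exact hd.2
  refine ⟨⟨M * D, Matrix.mem_specialUnitaryGroup_iff.mpr ⟨mul_mem hMunit hDunit, hdet⟩⟩,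
    (‖ψ‖⁻¹ : ℝ), ?_, ?_⟩
  · simp only [ne_eq, Complex.ofReal_eq_zero, inv_eq_zero]
    exact norm_ne_zero_iff.mpr hψ0
  · show (M * D).mulVec eVec = _
    rw [← Matrix.mulVec_mulVec]
    have hD : D.mulVec eVec = eVec := by
      rw [eVec_def, hDdef, Matrix.diagonal_mulVec_single]
      simp
    rw [hD]
    funext i
    rw [eVec_def, Matrix.mulVec_single]
    show M i 2 * 1 = _
    rw [mul_one]
    show (WithLp.equiv 2 (Fin 3 → ℂ)) (b 2) i = _
    rw [hb2]
    rw [WithLp.equiv_apply, WithLp.ofLp_smul]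
    show (‖ψ‖⁻¹ : ℝ) • ((WithLp.equiv 2 (Fin 3 → ℂ)) ψ i) = _
    rw [hψdef, Equiv.apply_symm_apply]
    simp [Complex.real_smul]

end SU3StabAux3

/-- The stabilizer of a nonzero vector under the fundamental action of `SU(3)` is isomorphic,
as a group, to `SU(2)`. -/
theorem stabilizer_SU3_iso_SU2 (φ : Fin 3 → ℂ) (hφ : φ ≠ 0) :
    Nonempty (stabilizerSU3 φ ≃* Matrix.specialUnitaryGroup (Fin 2) ℂ) := by
  obtain ⟨g, c, hc, hg⟩ := exists_SU3_mulVec_eq φ hφ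
  have key : stabilizerSU3 (g.val.mulVec eVec) = stabilizerSU3 φ := by
    rw [hg, stabilizerSU3_smul c hc]
  exact ⟨((MulEquiv.submonoidCongr key).symm.trans (conjEquiv eVec g).symm).trans embIso.symm⟩
end
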